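/- arXiv:2010.15779 — 2 statements merged into one kernel-verified Lean document; each statement's English description precedes it below -/
import Mathlib

section
/- With Λ_k as above defining a new probability measure P̄ by dP̄/dP = Λ_N on G_N, the random variables R_k := B + ε_k, k = 1,...,N, are, under P̄, mutually independent, independent of B, and each R_k has the law with density g (the same law as ε_k under P). -/
open MeasureTheory ProbabilityTheory
open scoped ENNReal

/-!
Under `P` the pair `(ε, B)` has law `(⊗ₖ ν) ⊗ law(B)`, where `ν = g · volume`. For fixed `b`,
reweighting `ν` by `g (b + e) / g e` gives the measure with density `g (b + ·)`, and translation
invariance of Lebesgue measure turns its image under `e ↦ b + e` back into `ν`. Applying this in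
every coordinate and integrating over the law of `B` shows that `(B + ε, B)` has law
`(⊗ₖ ν) ⊗ law(B)` under `P̄`, which is the claim.
-/

namespace MeasureTheory.Measure

variable {α β : Type*} [MeasurableSpace α] [MeasurableSpace β]

theorem map_withDensity_comp (μ : Measure α) {f : α → β} (hf : Measurable f) {ρ : β → ℝ≥0∞}
    (hρ : Measurable ρ) : (μ.withDensity (ρ ∘ f)).map f = (μ.map f).withDensity ρ := by
  ext s hs
  rw [map_apply hf hs, withDensity_apply _ (hf hs), withDensity_apply _ hs,
    setLIntegral_map hs hρ hf]
  rfl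

theorem map_withDensity_ratio_add_left {G : Type*} [MeasurableSpace G] [AddGroup G]
    [MeasurableAdd G] (μ : Measure G) [μ.IsAddLeftInvariant] {g : G → ℝ} (hg_pos : ∀ x, 0 < g x)
    (hg : Measurable g) (b : G) :
    ((μ.withDensity fun x => ENNReal.ofReal (g x)).withDensity
        fun x => ENNReal.ofReal (g (b + x) / g x)).map (b + ·)
      = μ.withDensity fun x => ENNReal.ofReal (g x) := by
  have hdens : (fun x => ENNReal.ofReal (g x) * ENNReal.ofReal (g (b + x) / g x))
      = (fun x => ENNReal.ofReal (g x)) ∘ (b + ·) := by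
    funext x
    rw [← ENNReal.ofReal_mul (hg_pos x).le, mul_div_cancel₀ _ (hg_pos x).ne']
    rfl
  rw [← withDensity_mul _ hg.ennreal_ofReal (by fun_prop), Pi.mul_def, hdens,
    map_withDensity_comp _ (measurable_const_add b) hg.ennreal_ofReal, map_add_left_eq_self]

theorem pi_withDensity {ι : Type*} [Fintype ι] {X : ι → Type*} [∀ i, MeasurableSpace (X i)]
    (μ : ∀ i, Measure (X i)) [∀ i, IsProbabilityMeasure (μ i)] {f : ∀ i, X i → ℝ≥0∞}
    (hf : ∀ i, Measurable (f i)) [∀ i, SigmaFinite ((μ i).withDensity (f i))] :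
    Measure.pi (fun i => (μ i).withDensity (f i))
      = (Measure.pi μ).withDensity fun x => ∏ i, f i (x i) := by
  refine pi_eq fun s hs => ?_
  have hind : (Set.univ.pi s).indicator (fun x => ∏ i, f i (x i))
      = fun x => ∏ i, (s i).indicator (f i) (x i) := by
    funext x
    by_cases hx : x ∈ Set.univ.pi s
    · rw [Set.indicator_of_mem hx]
      exact Finset.prod_congr rfl fun i _ => (Set.indicator_of_mem (hx i (Set.mem_univ i)) _).symm
    · obtain ⟨i, hi⟩ : ∃ i, x i ∉ s i := by simpa [Set.mem_pi] using hx
      rw [Set.indicator_of_notMem hx,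
        Finset.prod_eq_zero (Finset.mem_univ i) (Set.indicator_of_notMem hi _)]
  rw [withDensity_apply _ (.univ_pi hs), ← lintegral_indicator (.univ_pi hs), hind,
    lintegral_prod_eq_prod_lintegral_of_indepFun _ _
      (iIndepFun_pi fun i => ((hf i).indicator (hs i)).aemeasurable)
      fun i => ((hf i).indicator (hs i)).comp (measurable_pi_apply i)]
  refine Finset.prod_congr rfl fun i _ => ?_
  rw [withDensity_apply _ (hs i), ← lintegral_indicator (hs i),
    (measurePreserving_eval μ i).lintegral_comp ((hf i).indicator (hs i))]

theorem map_pi_withDensity_ratio_add_left {G : Type*} [MeasurableSpace G] [AddGroup G]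
    [MeasurableAdd G] (μ : Measure G) [μ.IsAddLeftInvariant] {g : G → ℝ} (hg_pos : ∀ x, 0 < g x)
    (hg : Measurable g) {ι : Type*} [Fintype ι] (ν : ι → Measure G)
    [∀ i, IsProbabilityMeasure (ν i)] (hν : ∀ i, ν i = μ.withDensity fun x => ENNReal.ofReal (g x))
    (b : G) :
    ((Measure.pi ν).withDensity fun e => ∏ i, ENNReal.ofReal (g (b + e i) / g (e i))).map
        (fun e i => b + e i) = Measure.pi ν := by
  have hfactor : ∀ i, ((ν i).withDensity fun x => ENNReal.ofReal (g (b + x) / g x)).map (b + ·)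
      = ν i := fun i => by
    rw [hν i]; exact map_withDensity_ratio_add_left μ hg_pos hg b
  have (i : ι) : SigmaFinite
      (((ν i).withDensity fun x => ENNReal.ofReal (g (b + x) / g x)).map (b + ·)) := by
    rw [hfactor i]; infer_instance
  rw [← pi_withDensity ν (f := fun _ x => ENNReal.ofReal (g (b + x) / g x)) fun _ => by fun_prop,
    pi_map_pi fun _ => (measurable_const_add b).aemeasurable]
  simp_rw [hfactor]

theorem map_prod_withDensity_eq_of_fiberwise {μ : Measure α} {ρ : Measure β} [SigmaFinite μ]
    [SigmaFinite ρ] {D : α × β → ℝ≥0∞} {h : β → α → α} (hD : Measurable D)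
    (hh : Measurable fun p : α × β => h p.2 p.1)
    (hfib : ∀ y, (μ.withDensity fun x => D (x, y)).map (h y) = μ) :
    ((μ.prod ρ).withDensity D).map (fun p => (h p.2 p.1, p.2)) = μ.prod ρ := by
  refine (prod_eq fun s t hs ht => ?_).symm
  set T : α × β → α × β := fun p => (h p.2 p.1, p.2)
  have hT : Measurable T := hh.prodMk measurable_snd
  have hst : MeasurableSet (T ⁻¹' s ×ˢ t) := hT (hs.prod ht)
  have hslice (y : β) : ∫⁻ x, (T ⁻¹' s ×ˢ t).indicator D (x, y) ∂μ
      = t.indicator (fun _ => μ s) y := by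
    by_cases hy : y ∈ t
    · have hmeas : Measurable (h y) := hh.comp measurable_prodMk_right
      have hpt (x : α) : (T ⁻¹' s ×ˢ t).indicator D (x, y)
          = (h y ⁻¹' s).indicator (fun x => D (x, y)) x := by
        by_cases hx : h y x ∈ s
        · rw [Set.indicator_of_mem (show (x, y) ∈ T ⁻¹' s ×ˢ t from ⟨hx, hy⟩),
            Set.indicator_of_mem (show x ∈ h y ⁻¹' s from hx)]
        · rw [Set.indicator_of_notMem (show (x, y) ∉ T ⁻¹' s ×ˢ t from fun hmem => hx hmem.1),
            Set.indicator_of_notMem (show x ∉ h y ⁻¹' s from hx)]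
      simp_rw [hpt]
      rw [Set.indicator_of_mem hy, lintegral_indicator (hmeas hs),
        ← withDensity_apply _ (hmeas hs), ← map_apply hmeas hs, hfib]
    · simp [T, hy]
  rw [map_apply hT (hs.prod ht), withDensity_apply _ hst, ← lintegral_indicator hst,
    lintegral_prod_symm _ (hD.indicator hst).aemeasurable]
  simp_rw [hslice]
  rw [lintegral_indicator_const ht, mul_comm]

theorem map_prod_withDensity_ratio_add_left {G : Type*} [MeasurableSpace G] [AddGroup G]
    [MeasurableAdd₂ G] (μ : Measure G) [μ.IsAddLeftInvariant] {g : G → ℝ} (hg_pos : ∀ x, 0 < g x)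
    (hg : Measurable g) {ι : Type*} [Fintype ι] (ν : ι → Measure G)
    [∀ i, IsProbabilityMeasure (ν i)] (hν : ∀ i, ν i = μ.withDensity fun x => ENNReal.ofReal (g x))
    (ρ : Measure G) [SigmaFinite ρ] :
    (((Measure.pi ν).prod ρ).withDensity
        fun p => ∏ i, ENNReal.ofReal (g (p.2 + p.1 i) / g (p.1 i))).map
      (fun p => (fun i => p.2 + p.1 i, p.2)) = (Measure.pi ν).prod ρ := by
  have hD : Measurable fun p : (ι → G) × G =>
      ∏ i, ENNReal.ofReal (g (p.2 + p.1 i) / g (p.1 i)) := by fun_prop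
  have hh : Measurable fun p : (ι → G) × G => fun i => p.2 + p.1 i := by fun_prop
  exact map_prod_withDensity_eq_of_fiberwise hD hh
    fun b => map_pi_withDensity_ratio_add_left μ hg_pos hg ν hν b

end MeasureTheory.Measure

namespace ProbabilityTheory

variable {Ω ι : Type*} [MeasurableSpace Ω] {P : Measure Ω} [Fintype ι]

theorem iIndepFun_and_map_eq_of_map_eq_pi {β : ι → Type*} [∀ i, MeasurableSpace (β i)]
    {f : ∀ i, Ω → β i} (hf : ∀ i, Measurable (f i)) {μ : ∀ i, Measure (β i)}
    [∀ i, IsProbabilityMeasure (μ i)] (h : P.map (fun ω i => f i ω) = Measure.pi μ) :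
    iIndepFun f P ∧ ∀ i, P.map (f i) = μ i := by
  have hmarg (i : ι) : P.map (f i) = μ i := by
    rw [← (measurePreserving_eval μ i).map_eq, ← h,
      Measure.map_map (measurable_pi_apply i) (measurable_pi_lambda _ hf)]
    rfl
  have : IsProbabilityMeasure (P.map fun ω i => f i ω) := by rw [h]; infer_instance
  have := Measure.isProbabilityMeasure_of_map (μ := P) fun ω i => f i ω
  refine ⟨(iIndepFun_iff_map_fun_eq_pi_map fun i => (hf i).aemeasurable).2 ?_, hmarg⟩
  simp_rw [h, hmarg]

variable {β : Option ι → Type*} [∀ o, MeasurableSpace (β o)] {f : ∀ o, Ω → β o}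

theorem iIndepFun.map_option_eq_prod_pi (hf : ∀ o, Measurable (f o)) (h : iIndepFun f P) :
    P.map (fun ω => (fun i => f (some i) ω, f none ω))
      = (Measure.pi fun i => P.map (f (some i))).prod (P.map (f none)) := by
  have := h.isProbabilityMeasure
  have (o : Option ι) : IsProbabilityMeasure (P.map (f o)) :=
    Measure.isProbabilityMeasure_map (hf o).aemeasurable
  let e := MeasurableEquiv.piOptionEquivProd β
  calc P.map (fun ω => (fun i => f (some i) ω, f none ω))
      = (P.map fun ω o => f o ω).map e := by
        rw [Measure.map_map e.measurable (measurable_pi_lambda _ hf)]; rfl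
    _ = _ := by
        rw [h.map_fun_eq_pi_map fun o => (hf o).aemeasurable, ← Measure.pi_map_piOptionEquivProd,
          MeasurableEquiv.map_map_symm]

theorem iIndepFun_and_map_eq_of_map_eq_prod_pi (hf : ∀ o, Measurable (f o))
    {μ : ∀ o, Measure (β o)} [∀ o, IsProbabilityMeasure (μ o)]
    (h : P.map (fun ω => (fun i => f (some i) ω, f none ω))
      = (Measure.pi fun i => μ (some i)).prod (μ none)) :
    iIndepFun f P ∧ ∀ o, P.map (f o) = μ o := by
  refine iIndepFun_and_map_eq_of_map_eq_pi hf ?_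
  let e := MeasurableEquiv.piOptionEquivProd β
  have hY : Measurable fun ω => (fun i => f (some i) ω, f none ω) :=
    (measurable_pi_lambda _ fun i => hf (some i)).prodMk (hf none)
  calc P.map (fun ω o => f o ω)
      = (P.map fun ω => (fun i => f (some i) ω, f none ω)).map e.symm := by
        rw [Measure.map_map e.symm.measurable hY]
        congr 1
        funext ω o
        cases o <;> rfl
    _ = Measure.pi μ := by rw [h, Measure.pi_map_piOptionEquivProd]

end ProbabilityTheory

/-- Under `P̄ = Λ_N · P`, the returns `R_k = B + ε_k`, `k = 1,…,N`, are mutually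
independent, independent of `B`, and each has the law with density `g`. -/
theorem stmt1
    {Ω : Type*} [MeasurableSpace Ω] (P : Measure Ω) [IsProbabilityMeasure P]
    (d N : ℕ)
    (g : (Fin d → ℝ) → ℝ) (hg_pos : ∀ x, 0 < g x) (hg_meas : Measurable g)
    (B : Ω → Fin d → ℝ) (ε : Fin N → Ω → Fin d → ℝ)
    (hB : Measurable B) (hε : ∀ i, Measurable (ε i))
    (hdist : ∀ i, Measure.map (ε i) P
      = (volume : Measure (Fin d → ℝ)).withDensity (fun x => ENNReal.ofReal (g x)))
    (hindep : iIndepFun (β := fun _ : Option (Fin N) => Fin d → ℝ)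
      (fun o => Option.elim o B ε) P)
    (ΛN : Ω → ℝ)
    (hΛN : ∀ ω, ΛN ω = ∏ ℓ : Fin N, g (B ω + ε ℓ ω) / g (ε ℓ ω))
    (Pbar : Measure Ω)
    (hPbar : Pbar = P.withDensity (fun ω => ENNReal.ofReal (ΛN ω))) :
    iIndepFun (β := fun _ : Option (Fin N) => Fin d → ℝ)
      (fun o => Option.elim o B (fun k ω => B ω + ε k ω)) Pbar ∧
    ∀ k : Fin N, Measure.map (fun ω => B ω + ε k ω) Pbar
      = (volume : Measure (Fin d → ℝ)).withDensity (fun x => ENNReal.ofReal (g x)) := by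
  have hX : ∀ o, Measurable (Option.elim o B ε) := by rintro (_ | k); exacts [hB, hε k]
  have hR : ∀ o, Measurable (Option.elim o B fun k ω => B ω + ε k ω) := by
    rintro (_ | k); exacts [hB, hB.add (hε k)]
  have (o : Option (Fin N)) : IsProbabilityMeasure (P.map (Option.elim o B ε)) :=
    Measure.isProbabilityMeasure_map (hX o).aemeasurable
  have (k : Fin N) : IsProbabilityMeasure (P.map (ε k)) := this (some k)
  have hY : Measurable fun ω => (fun k => ε k ω, B ω) := (measurable_pi_lambda _ hε).prodMk hB
  set D : (Fin N → Fin d → ℝ) × (Fin d → ℝ) → ℝ≥0∞ :=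
    fun p => ∏ k, ENNReal.ofReal (g (p.2 + p.1 k) / g (p.1 k))
  have hD : Measurable D := by fun_prop
  have hPbar_eq : Pbar = P.withDensity (D ∘ fun ω => (fun k => ε k ω, B ω)) := by
    rw [hPbar]
    congr 1
    funext ω
    rw [hΛN, ENNReal.ofReal_prod_of_nonneg fun k _ => (div_pos (hg_pos _) (hg_pos _)).le]
    rfl
  have hlawP : P.map (fun ω => (fun k => ε k ω, B ω))
      = (Measure.pi fun k => P.map (ε k)).prod (P.map B) :=
    hindep.map_option_eq_prod_pi hX
  have hlawPbar : Pbar.map (fun ω => (fun k => B ω + ε k ω, B ω))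
      = (Measure.pi fun k => P.map (ε k)).prod (P.map B) :=
    calc Pbar.map (fun ω => (fun k => B ω + ε k ω, B ω))
        = ((P.map fun ω => (fun k => ε k ω, B ω)).withDensity D).map
            fun p => (fun k => p.2 + p.1 k, p.2) := by
          rw [hPbar_eq, ← Measure.map_withDensity_comp _ hY hD, Measure.map_map (by fun_prop) hY]
          rfl
      _ = _ := by
          rw [hlawP]
          exact Measure.map_prod_withDensity_ratio_add_left volume hg_pos hg_meas _ hdist _
  obtain ⟨hind, hmarg⟩ := iIndepFun_and_map_eq_of_map_eq_prod_pi
    (μ := fun o => P.map (Option.elim o B ε)) hR hlawPbar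
  exact ⟨hind, fun k => (hmarg (some k)).trans (hdist k)⟩
end

section
/- Fix q ∈ (0,1) and (x,z) with 0 < qz ≤ x ≤ z. Let Y be an ℝ^d-valued random variable whose law has full support (−1,∞)^d. Then the set of a ∈ ℝ^d such that almost surely 1 + a'Y ≥ q·max(z/x, 1 + a'Y) equals { a ∈ ℝ_+^d : ∑_{i=1}^d a_i ≤ 1 − q z/x }. -/
open MeasureTheory

/-- characterization of the one-step admissible set under the drawdown
constraint: for `Y` with law of full support `(−1,∞)^d`,
`{a : 1 + a'Y ≥ q max(z/x, 1 + a'Y) a.s.} = {a ∈ ℝ₊^d : ∑ a_i ≤ 1 − q z/x}`. -/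
theorem stmt3
    {Ω : Type*} [MeasurableSpace Ω] (P : Measure Ω) [IsProbabilityMeasure P]
    (d : ℕ) (Y : Ω → Fin d → ℝ) (hY : Measurable Y)
    (q x z : ℝ) (hq : q ∈ Set.Ioo (0 : ℝ) 1)
    (hqz : 0 < q * z) (hqzx : q * z ≤ x) (hxz : x ≤ z)
    -- the law of Y is carried by, and has full support in, (−1,∞)^d
    (hYval : ∀ᵐ ω ∂P, ∀ i, -1 < Y ω i)
    (hsupp : ∀ U : Set (Fin d → ℝ), IsOpen U →
      (U ∩ {y | ∀ i, -1 < y i}).Nonempty → 0 < P (Y ⁻¹' U)) :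
    {a : Fin d → ℝ | ∀ᵐ ω ∂P,
        q * max (z / x) (1 + ∑ i, a i * Y ω i) ≤ 1 + ∑ i, a i * Y ω i}
      = {a : Fin d → ℝ | (∀ i, 0 ≤ a i) ∧ ∑ i, a i ≤ 1 - q * z / x} := by
  obtain ⟨hq0, hq1⟩ := hq
  have hx : 0 < x := lt_of_lt_of_le hqz hqzx
  set c : ℝ := q * z / x with hc
  have hc0 : 0 < c := div_pos hqz hx
  have hc1 : c ≤ 1 := by rw [hc, div_le_one hx]; exact hqzx
  have key : ∀ s : ℝ,
      (q * max (z / x) (1 + s) ≤ 1 + s) ↔ c ≤ 1 + s := by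
    intro s
    constructor
    · intro h
      calc c = q * (z / x) := by rw [hc, mul_div_assoc]
        _ ≤ q * max (z / x) (1 + s) :=
            mul_le_mul_of_nonneg_left (le_max_left _ _) hq0.le
        _ ≤ 1 + s := h
    · intro h
      rcases le_total (1 + s) (z / x) with h1 | h1
      · rw [max_eq_left h1]
        calc q * (z / x) = c := by rw [hc, mul_div_assoc]
          _ ≤ 1 + s := h
      · rw [max_eq_right h1]
        have hpos : 0 < 1 + s := lt_of_lt_of_le hc0 h
        nlinarith
  ext a
  simp only [Set.mem_setOf_eq]
  constructor
  · intro ha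
    by_contra hcon
    have ha' : ∀ᵐ ω ∂P, c ≤ 1 + ∑ i, a i * Y ω i := by
      filter_upwards [ha] with ω hω
      exact (key _).mp hω
    obtain ⟨y, hy1, hy2⟩ : ∃ y : Fin d → ℝ,
        (∀ i, -1 < y i) ∧ ∑ i, a i * y i < c - 1 := by
      by_cases hpos : ∀ i, 0 ≤ a i
      · have hs : 1 - c < ∑ i, a i := by
          by_contra hs
          exact hcon ⟨hpos, by linarith [not_lt.mp hs]⟩
        set s := ∑ i, a i with hsdef
        have hs0 : 0 < s := by linarith
        have hε : 0 < (s - (1 - c)) / (2 * s) := by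
          apply div_pos <;> linarith
        refine ⟨fun _ => -1 + (s - (1 - c)) / (2 * s), fun i => by linarith, ?_⟩
        have hsum : ∑ i, a i * (-1 + (s - (1 - c)) / (2 * s))
            = s * (-1 + (s - (1 - c)) / (2 * s)) := by
          rw [hsdef, Finset.sum_mul]
        rw [hsum]
        have heq : s * (-1 + (s - (1 - c)) / (2 * s)) = -s + (s - (1 - c)) / 2 := by
          field_simp
        rw [heq]
        linarith
      · push_neg at hpos
        obtain ⟨j, hj⟩ := hpos
        refine ⟨fun i => if i = j then (c - 2) / a j else 0, ?_, ?_⟩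
        · intro i
          by_cases h : i = j
          · simp only [if_pos h]
            have : 0 < (c - 2) / a j := div_pos_of_neg_of_neg (by linarith) hj
            linarith
          · simp [h]
        · have hsum : ∑ i, a i * (if i = j then (c - 2) / a j else 0)
              = a j * ((c - 2) / a j) := by
            rw [Finset.sum_eq_single j]
            · simp
            · intro b _ hb; simp [hb]
            · intro h; exact absurd (Finset.mem_univ j) h
          rw [hsum, mul_div_cancel₀ _ (ne_of_lt hj)]
          linarith
    set U : Set (Fin d → ℝ) := {y | ∑ i, a i * y i < c - 1} with hU
    have hUopen : IsOpen U := by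
      apply isOpen_lt _ continuous_const
      exact continuous_finset_sum _ fun i _ => continuous_const.mul (continuous_apply i)
    have hP := hsupp U hUopen ⟨y, hy2, hy1⟩
    have hzero : P (Y ⁻¹' U) = 0 := by
      refine measure_mono_null ?_ (ae_iff.mp ha')
      intro ω hω
      simp only [Set.mem_setOf_eq, not_le]
      have : ∑ i, a i * Y ω i < c - 1 := hω
      linarith
    exact absurd hzero hP.ne'
  · rintro ⟨hpos, hsum⟩
    filter_upwards [hYval] with ω hω
    apply (key _).mpr
    have : ∑ i, -(a i) ≤ ∑ i, a i * Y ω i :=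
      Finset.sum_le_sum fun i _ => by nlinarith [hω i, hpos i]
    rw [Finset.sum_neg_distrib] at this
    linarith
end
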